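/- Under the rescaling r' = r/√ε, s = εt, the Kolmogorov operator of the stochastic Hopf equation at the bifurcation point δ = 0 becomes independent of ε; consequently, if λ is an eigenvalue of the ε-dependent Kolmogorov operator K_ε (in the (r,φ) variables at δ = 0), then λ = ε·λ̃ where λ̃ is an eigenvalue of the ε-independent rescaled operator K̃ = (−r'³ + 1/(2r'))∂_{r'} + (1/2)∂²_{r'r'} − (β/r')∂²_{r'φ'} + ((1+β²)/(2r'²))∂²_{φ'φ'}. In particular the real parts of all mixing eigenvalues at δ = 0 scale linearly in ε: Re(λ_k) = ε·Re(λ̃_k). -/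

import Mathlib

noncomputable def pdR (u : ℝ × ℝ → ℂ) (p : ℝ × ℝ) : ℂ :=
  deriv (fun s => u (s, p.2)) p.1

noncomputable def pdPhi (u : ℝ × ℝ → ℂ) (p : ℝ × ℝ) : ℂ :=
  deriv (fun t => u (p.1, t)) p.2

noncomputable def hopfKolmogorov (ε β : ℝ) (u : ℝ × ℝ → ℂ) (p : ℝ × ℝ) : ℂ :=
  ((-p.1 ^ 3 + ε ^ 2 / (2 * p.1) : ℝ) : ℂ) * pdR u p
    + ((ε ^ 2 / 2 : ℝ) : ℂ) * pdR (pdR u) p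
    - ((ε ^ 2 * β / p.1 : ℝ) : ℂ) * pdR (pdPhi u) p
    + ((ε ^ 2 * (1 + β ^ 2) / (2 * p.1 ^ 2) : ℝ) : ℂ) * pdPhi (pdPhi u) p

noncomputable def hopfKolmogorovRescaled (β : ℝ) (u : ℝ × ℝ → ℂ) (p : ℝ × ℝ) : ℂ :=
  ((-p.1 ^ 3 + 1 / (2 * p.1) : ℝ) : ℂ) * pdR u p
    + ((1 / 2 : ℝ) : ℂ) * pdR (pdR u) p
    - ((β / p.1 : ℝ) : ℂ) * pdR (pdPhi u) p
    + (((1 + β ^ 2) / (2 * p.1 ^ 2) : ℝ) : ℂ) * pdPhi (pdPhi u) p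

lemma hasDerivAt_fst (u : ℝ × ℝ → ℂ) (hu : ContDiff ℝ (⊤ : ℕ∞) u) (s t : ℝ) :
    HasDerivAt (fun s' => u (s', t)) (fderiv ℝ u (s, t) (1, 0)) s := by
  have h1 : HasDerivAt (fun s' : ℝ => ((s', t) : ℝ × ℝ)) ((1, 0) : ℝ × ℝ) s :=
    (hasDerivAt_id s).prodMk (hasDerivAt_const s t)
  exact ((hu.differentiable (by simp) (s, t)).hasFDerivAt).comp_hasDerivAt s h1

lemma hasDerivAt_snd (u : ℝ × ℝ → ℂ) (hu : ContDiff ℝ (⊤ : ℕ∞) u) (s t : ℝ) :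
    HasDerivAt (fun t' => u (s, t')) (fderiv ℝ u (s, t) (0, 1)) t := by
  have h1 : HasDerivAt (fun t' : ℝ => ((s, t') : ℝ × ℝ)) ((0, 1) : ℝ × ℝ) t :=
    (hasDerivAt_const t s).prodMk (hasDerivAt_id t)
  exact ((hu.differentiable (by simp) (s, t)).hasFDerivAt).comp_hasDerivAt t h1

lemma pdR_eq (u : ℝ × ℝ → ℂ) (hu : ContDiff ℝ (⊤ : ℕ∞) u) (p : ℝ × ℝ) :
    pdR u p = fderiv ℝ u p (1, 0) := by
  have := (hasDerivAt_fst u hu p.1 p.2).deriv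
  simpa [pdR] using this

lemma pdPhi_eq (u : ℝ × ℝ → ℂ) (hu : ContDiff ℝ (⊤ : ℕ∞) u) (p : ℝ × ℝ) :
    pdPhi u p = fderiv ℝ u p (0, 1) := by
  have := (hasDerivAt_snd u hu p.1 p.2).deriv
  simpa [pdPhi] using this

lemma contDiff_pdR (u : ℝ × ℝ → ℂ) (hu : ContDiff ℝ (⊤ : ℕ∞) u) : ContDiff ℝ (⊤ : ℕ∞) (pdR u) := by
  have : pdR u = fun p => fderiv ℝ u p (1, 0) := funext (pdR_eq u hu)
  rw [this]
  exact (hu.fderiv_right (by simp)).clm_apply contDiff_const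

lemma contDiff_pdPhi (u : ℝ × ℝ → ℂ) (hu : ContDiff ℝ (⊤ : ℕ∞) u) : ContDiff ℝ (⊤ : ℕ∞) (pdPhi u) := by
  have : pdPhi u = fun p => fderiv ℝ u p (0, 1) := funext (pdPhi_eq u hu)
  rw [this]
  exact (hu.fderiv_right (by simp)).clm_apply contDiff_const

lemma pdR_scale (c : ℝ) (u : ℝ × ℝ → ℂ) (hu : ContDiff ℝ (⊤ : ℕ∞) u) (p : ℝ × ℝ) :
    pdR (fun q => u (c * q.1, q.2)) p = (c : ℂ) * pdR u (c * p.1, p.2) := by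
  have h1 : HasDerivAt (fun s : ℝ => ((c * s, p.2) : ℝ × ℝ)) ((c, 0) : ℝ × ℝ) p.1 := by
    have := ((hasDerivAt_id p.1).const_mul c).prodMk (hasDerivAt_const p.1 p.2)
    simpa using this
  have h2 : HasDerivAt (fun s => u (c * s, p.2)) (fderiv ℝ u (c * p.1, p.2) ((c, 0) : ℝ × ℝ)) p.1 :=
    ((hu.differentiable (by simp) (c * p.1, p.2)).hasFDerivAt).comp_hasDerivAt p.1 h1
  have h3 : ((c, 0) : ℝ × ℝ) = c • ((1, 0) : ℝ × ℝ) := by simp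
  rw [pdR, h2.deriv, h3, map_smul, pdR_eq u hu]
  simp [Complex.real_smul]

lemma pdR_const_mul (a : ℂ) (u : ℝ × ℝ → ℂ) (hu : ContDiff ℝ (⊤ : ℕ∞) u) (p : ℝ × ℝ) :
    pdR (fun q => a * u q) p = a * pdR u p := by
  have h := hasDerivAt_fst u hu p.1 p.2
  have h2 := (h.const_mul a).deriv
  have h3 := h.deriv
  simpa [pdR, h3] using h2

lemma pdPhi_scale (c : ℝ) (u : ℝ × ℝ → ℂ) (p : ℝ × ℝ) :
    pdPhi (fun q => u (c * q.1, q.2)) p = pdPhi u (c * p.1, p.2) := rfl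

theorem hopf_critical_eigenvalue_scaling
    (ε β : ℝ) (hε : 0 < ε) (lam : ℂ) (ψ : ℝ × ℝ → ℂ)
    (hψ : ContDiff ℝ (⊤ : ℕ∞) ψ) (hne : ψ ≠ 0)
    (heig : ∀ p : ℝ × ℝ, 0 < p.1 → hopfKolmogorov ε β ψ p = lam * ψ p) :
    (∀ p : ℝ × ℝ, 0 < p.1 →
      hopfKolmogorovRescaled β (fun q => ψ (Real.sqrt ε * q.1, q.2)) p
        = (lam / (ε : ℂ)) * ψ (Real.sqrt ε * p.1, p.2)) ∧
    lam.re = ε * (lam / (ε : ℂ)).re := by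
  set c : ℝ := Real.sqrt ε with hcdef
  have hc0 : 0 < c := Real.sqrt_pos.mpr hε
  have hc2 : c ^ 2 = ε := Real.sq_sqrt hε.le
  have hεne : (ε : ℂ) ≠ 0 := by exact_mod_cast hε.ne'
  have hcne : (c : ℂ) ≠ 0 := by exact_mod_cast hc0.ne'
  constructor
  · intro p hp
    have hpne : (p.1 : ℂ) ≠ 0 := by exact_mod_cast hp.ne'
    have hcp : 0 < c * p.1 := mul_pos hc0 hp
    have key := heig (c * p.1, p.2) hcp
    -- derivative computations
    have h1 : pdR (fun q => ψ (c * q.1, q.2)) p = (c : ℂ) * pdR ψ (c * p.1, p.2) :=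
      pdR_scale c ψ hψ p
    have hRψ := contDiff_pdR ψ hψ
    have hΦψ := contDiff_pdPhi ψ hψ
    -- second radial derivative
    have hfun1 : pdR (fun q => ψ (c * q.1, q.2))
        = fun q => (c : ℂ) * pdR ψ (c * q.1, q.2) := funext (pdR_scale c ψ hψ)
    have hsm : ContDiff ℝ (⊤ : ℕ∞) (fun q : ℝ × ℝ => (c : ℂ) * pdR ψ q) :=
      contDiff_const.mul hRψ
    have h2 : pdR (pdR (fun q => ψ (c * q.1, q.2))) p
        = (c : ℂ) * ((c : ℂ) * pdR (pdR ψ) (c * p.1, p.2)) := by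
      rw [hfun1]
      have := pdR_scale c (fun q => (c : ℂ) * pdR ψ q) hsm p
      rw [this, pdR_const_mul (c : ℂ) (pdR ψ) hRψ]
    -- mixed derivative
    have hfun2 : pdPhi (fun q => ψ (c * q.1, q.2))
        = fun q => pdPhi ψ (c * q.1, q.2) := funext (pdPhi_scale c ψ)
    have h3 : pdR (pdPhi (fun q => ψ (c * q.1, q.2))) p
        = (c : ℂ) * pdR (pdPhi ψ) (c * p.1, p.2) := by
      rw [hfun2]; exact pdR_scale c (pdPhi ψ) hΦψ p
    -- second angular derivative
    have h4 : pdPhi (pdPhi (fun q => ψ (c * q.1, q.2))) p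
        = pdPhi (pdPhi ψ) (c * p.1, p.2) := by
      rw [hfun2]; exact pdPhi_scale c (pdPhi ψ) p
    have hpne' : p.1 ≠ 0 := hp.ne'
    have E1 : (-(c * p.1) ^ 3 + ε ^ 2 / (2 * (c * p.1)) : ℝ)
        = c ^ 3 * (-p.1 ^ 3 + 1 / (2 * p.1)) := by
      rw [← hc2]; field_simp
    have E2 : (ε ^ 2 / 2 : ℝ) = c ^ 2 * (c ^ 2 / 2) := by rw [← hc2]; ring
    have E3 : (ε ^ 2 * β / (c * p.1) : ℝ) = c ^ 3 * (β / p.1) := by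
      rw [← hc2]; field_simp
    have E4 : (ε ^ 2 * (1 + β ^ 2) / (2 * (c * p.1) ^ 2) : ℝ)
        = c ^ 2 * ((1 + β ^ 2) / (2 * p.1 ^ 2)) := by
      rw [← hc2]; field_simp
    rw [hopfKolmogorov] at key
    simp only at key
    rw [E1, E2, E3, E4] at key
    have hεc : ((ε : ℝ) : ℂ) = (c : ℂ) ^ 2 := by rw [← hc2]; push_cast; ring
    rw [hopfKolmogorovRescaled, h1, h2, h3, h4, div_mul_eq_mul_div, eq_div_iff hεne, ← key,
      hεc]
    push_cast
    ring
  · rw [Complex.div_ofReal_re]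
    field_simp
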